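/- arXiv:1607.08299 — 4 statements merged into one kernel-verified Lean document; each statement's English description precedes it below -/
import Mathlib

section
/- With a_n = ∏_{k=1}^{n-1}(1 + β_k λ_k / k), M_n = (S_n − E(S_n))/a_n, D_1 = M_1 and D_n = M_n − M_{n−1} for n ≥ 2, the martingale differences satisfy |D_n| ≤ 2/a_n for all n ≥ 1. -/
open MeasureTheory ProbabilityTheory

/-- For the linear BSRD, with `a n = ∏_{k=1}^{n-1} (1 + β k * λ k / k)` (`a 1 = 1`),
`M n = (S n - E(S n)) / a n`, `D 1 = M 1` and `D n = M n - M (n-1)` for `n ≥ 2`,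
the martingale differences are bounded: `|D n| ≤ 2 / a n` for all `n ≥ 1`. -/
theorem stmt4 {Ω : Type*} {m0 : MeasurableSpace Ω} (μ : Measure Ω) [IsProbabilityMeasure μ]
    (X : ℕ → Ω → ℝ) (β lam : ℕ → ℝ)
    (S : ℕ → Ω → ℝ) (hS : ∀ m ω, S m ω = ∑ j ∈ Finset.range m, X (j + 1) ω)
    (hXmeas : ∀ j, Measurable (X j))
    (hX01 : ∀ j ω, X j ω = 0 ∨ X j ω = 1)
    (hbl : ∀ k : ℕ, 1 ≤ k → 0 ≤ β k * lam k ∧ β k * lam k ≤ 1)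
    (a : ℕ → ℝ)
    (ha : ∀ n : ℕ, 1 ≤ n → a n = ∏ k ∈ Finset.Icc 1 (n - 1), (1 + β k * lam k / k))
    (M : ℕ → Ω → ℝ)
    (hM : ∀ n ω, M n ω = (S n ω - ∫ ω', S n ω' ∂μ) / a n)
    (D : ℕ → Ω → ℝ)
    (hD1 : ∀ ω, D 1 ω = M 1 ω)
    (hD : ∀ n : ℕ, 2 ≤ n → ∀ ω, D n ω = M n ω - M (n - 1) ω) :
    ∀ n : ℕ, 1 ≤ n → ∀ ω, |D n ω| ≤ 2 / a n := by
  have hXb : ∀ j ω, 0 ≤ X j ω ∧ X j ω ≤ 1 := by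
    intro j ω; rcases hX01 j ω with h | h <;> simp [h]
  have hXint : ∀ j, Integrable (X j) μ := by
    intro j
    refine (integrable_const (1 : ℝ)).mono' (hXmeas j).aestronglyMeasurable ?_
    filter_upwards with ω
    rw [Real.norm_eq_abs, abs_of_nonneg (hXb j ω).1]; exact (hXb j ω).2
  have hSint : ∀ m, Integrable (S m) μ := by
    intro m
    have h : S m = fun ω => ∑ j ∈ Finset.range m, X (j + 1) ω := by
      funext ω; exact hS m ω
    rw [h]
    exact integrable_finset_sum _ fun j _ => hXint _
  have hEX : ∀ j, 0 ≤ (∫ ω, X j ω ∂μ) ∧ (∫ ω, X j ω ∂μ) ≤ 1 := by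
    intro j
    constructor
    · exact integral_nonneg fun ω => (hXb j ω).1
    · calc (∫ ω, X j ω ∂μ) ≤ ∫ _, (1 : ℝ) ∂μ :=
        integral_mono (hXint j) (integrable_const _) fun ω => (hXb j ω).2
      _ = 1 := by simp
  have hSb : ∀ m ω, 0 ≤ S m ω ∧ S m ω ≤ m := by
    intro m ω
    rw [hS]
    refine ⟨Finset.sum_nonneg fun j _ => (hXb _ ω).1, ?_⟩
    calc ∑ j ∈ Finset.range m, X (j + 1) ω ≤ ∑ _j ∈ Finset.range m, (1 : ℝ) :=
      Finset.sum_le_sum fun j _ => (hXb _ ω).2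
    _ = m := by simp
  have hESb : ∀ m, 0 ≤ (∫ ω, S m ω ∂μ) ∧ (∫ ω, S m ω ∂μ) ≤ m := by
    intro m
    constructor
    · exact integral_nonneg fun ω => (hSb m ω).1
    · calc (∫ ω, S m ω ∂μ) ≤ ∫ _, (m : ℝ) ∂μ :=
        integral_mono (hSint m) (integrable_const _) fun ω => (hSb m ω).2
      _ = m := by simp
  have ha1 : ∀ n, 1 ≤ n → 1 ≤ a n := by
    intro n hn
    rw [ha n hn]
    calc (1 : ℝ) = ∏ _k ∈ Finset.Icc 1 (n - 1), (1 : ℝ) := by simp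
    _ ≤ ∏ k ∈ Finset.Icc 1 (n - 1), (1 + β k * lam k / k) := by
        refine Finset.prod_le_prod (fun k hk => by norm_num) fun k hk => ?_
        rw [Finset.mem_Icc] at hk
        have hk1 : (1 : ℝ) ≤ (k : ℝ) := by exact_mod_cast hk.1
        have h0 := (hbl k hk.1).1
        have : 0 ≤ β k * lam k / k := div_nonneg h0 (by linarith)
        linarith
  have harec : ∀ m : ℕ,
      a (m + 2) = a (m + 1) * (1 + β (m + 1) * lam (m + 1) / ((m : ℝ) + 1)) := by
    intro m
    rw [ha (m + 2) (by omega), ha (m + 1) (by omega)]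
    have h1 : m + 2 - 1 = m + 1 := rfl
    have h2 : m + 1 - 1 = m := rfl
    rw [h1, h2, Finset.prod_Icc_succ_top (Nat.le_add_left 1 m)]
    push_cast
    ring
  have hESsucc : ∀ m : ℕ,
      (∫ ω, S (m + 2) ω ∂μ) = (∫ ω, S (m + 1) ω ∂μ) + ∫ ω, X (m + 2) ω ∂μ := by
    intro m
    have h : (fun ω => S (m + 2) ω) = fun ω => S (m + 1) ω + X (m + 2) ω := by
      funext ω; rw [hS, hS, Finset.sum_range_succ]
    calc (∫ ω, S (m + 2) ω ∂μ) = ∫ ω, (S (m + 1) ω + X (m + 2) ω) ∂μ := by rw [h]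
    _ = _ := integral_add (hSint _) (hXint _)
  intro n hn ω
  match n, hn with
  | 1, _ =>
    have ha1' : a 1 = 1 := by
      rw [ha 1 le_rfl]
      simp
    rw [hD1 ω, hM, ha1']
    have h1 := hSb 1 ω
    have h2 := hESb 1
    push_cast at h1 h2
    rw [abs_le]
    constructor <;> [skip; skip] <;> (simp only [div_one]; linarith [h1.1, h1.2, h2.1, h2.2])
  | (m + 2), _ =>
    set c := β (m + 1) * lam (m + 1) with hc
    obtain ⟨hc0, hc1⟩ := hbl (m + 1) (by omega)
    rw [← hc] at hc0 hc1
    have hk0 : (0 : ℝ) < (m : ℝ) + 1 := by positivity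
    have hA1 : (1 : ℝ) ≤ a (m + 1) := ha1 (m + 1) (by omega)
    have hApos : (0 : ℝ) < a (m + 1) := by linarith
    have hfac : (0 : ℝ) < 1 + c / ((m : ℝ) + 1) := by positivity
    have hBpos : (0 : ℝ) < a (m + 2) := by
      rw [harec m, ← hc]; positivity
    have hSsucc : S (m + 2) ω = S (m + 1) ω + X (m + 2) ω := by
      rw [hS, hS, Finset.sum_range_succ]
    have hDval : D (m + 2) ω = M (m + 2) ω - M (m + 1) ω := hD (m + 2) (by omega) ω
    rw [hDval, hM, hM]
    have key : (S (m + 2) ω - ∫ ω', S (m + 2) ω' ∂μ) / a (m + 2)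
        - (S (m + 1) ω - ∫ ω', S (m + 1) ω' ∂μ) / a (m + 1)
        = ((X (m + 2) ω - ∫ ω', X (m + 2) ω' ∂μ)
          - (S (m + 1) ω - ∫ ω', S (m + 1) ω' ∂μ) * (c / ((m : ℝ) + 1))) / a (m + 2) := by
      rw [hSsucc, hESsucc m, harec m, ← hc]
      field_simp
      ring
    rw [key]
    have hdX : |X (m + 2) ω - ∫ ω', X (m + 2) ω' ∂μ| ≤ 1 := by
      have h1 := hXb (m + 2) ω
      have h2 := hEX (m + 2)
      rw [abs_le]; constructor <;> linarith [h1.1, h1.2, h2.1, h2.2]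
    have hT1 : |S (m + 1) ω - ∫ ω', S (m + 1) ω' ∂μ| ≤ (m : ℝ) + 1 := by
      have h1 := hSb (m + 1) ω
      have h2 := hESb (m + 1)
      push_cast at h1 h2
      rw [abs_le]; constructor <;> linarith [h1.1, h1.2, h2.1, h2.2]
    have hterm : |(S (m + 1) ω - ∫ ω', S (m + 1) ω' ∂μ) * (c / ((m : ℝ) + 1))| ≤ 1 := by
      rw [abs_mul, abs_of_nonneg (by positivity : (0:ℝ) ≤ c / ((m : ℝ) + 1))]
      calc |S (m + 1) ω - ∫ ω', S (m + 1) ω' ∂μ| * (c / ((m : ℝ) + 1))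
          ≤ ((m : ℝ) + 1) * (c / ((m : ℝ) + 1)) := by
            apply mul_le_mul_of_nonneg_right hT1 (by positivity)
        _ = c := by field_simp
        _ ≤ 1 := hc1
    have hnum : |(X (m + 2) ω - ∫ ω', X (m + 2) ω' ∂μ)
        - (S (m + 1) ω - ∫ ω', S (m + 1) ω' ∂μ) * (c / ((m : ℝ) + 1))| ≤ 2 := by
      calc _ ≤ |X (m + 2) ω - ∫ ω', X (m + 2) ω' ∂μ|
          + |(S (m + 1) ω - ∫ ω', S (m + 1) ω' ∂μ) * (c / ((m : ℝ) + 1))| := abs_sub _ _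
        _ ≤ 2 := by linarith
    rw [abs_div, abs_of_pos hBpos]
    gcongr
end

section
/- Let 0 ≤ β_k λ_k ≤ 1 for all k and a_n = ∏_{k=1}^{n-1}(1 + β_k λ_k/k). Then lim_{n→∞} a_n/n = 0 if and only if ∑_{k=1}^∞ (1 − β_k λ_k)/(k+1) = ∞. -/
open Filter

private lemma exp_neg_two_le (x : ℝ) (h0 : 0 ≤ x) (h2 : x ≤ 1/2) :
    Real.exp (-(2*x)) ≤ 1 - x := by
  have he : 1 + 2*x ≤ Real.exp (2*x) := by
    have := Real.add_one_le_exp (2*x); linarith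
  have hmul : Real.exp (-(2*x)) * Real.exp (2*x) = 1 := by
    rw [← Real.exp_add]; simp
  have hp : 0 < Real.exp (-(2*x)) := Real.exp_pos _
  nlinarith [mul_le_mul_of_nonneg_left he hp.le]

/-- With `0 ≤ β k * λ k ≤ 1` and `a n = ∏_{k=1}^{n-1} (1 + β k * λ k / k)`,
`a n / n → 0` if and only if `∑_{k=1}^∞ (1 - β k * λ k)/(k+1) = ∞`. -/
theorem stmt6 (β lam : ℕ → ℝ)
    (hbl : ∀ k : ℕ, 1 ≤ k → 0 ≤ β k * lam k ∧ β k * lam k ≤ 1)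
    (a : ℕ → ℝ)
    (ha : ∀ n : ℕ, 1 ≤ n → a n = ∏ k ∈ Finset.Icc 1 (n - 1), (1 + β k * lam k / k)) :
    Tendsto (fun n : ℕ => a n / n) atTop (nhds 0) ↔
      Tendsto (fun n : ℕ => ∑ k ∈ Finset.Icc 1 n, (1 - β k * lam k) / ((k : ℝ) + 1))
        atTop atTop := by
  set x : ℕ → ℝ := fun k => (1 - β k * lam k) / ((k : ℝ) + 1) with hxdef
  have hx0 : ∀ k : ℕ, 1 ≤ k → 0 ≤ x k := by
    intro k hk
    have h := hbl k hk
    have : (0:ℝ) < (k:ℝ) + 1 := by positivity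
    exact div_nonneg (by linarith [h.2]) this.le
  have hxh : ∀ k : ℕ, 1 ≤ k → x k ≤ 1/2 := by
    intro k hk
    have h := hbl k hk
    have hk' : (1:ℝ) ≤ (k:ℝ) := by exact_mod_cast hk
    rw [hxdef]
    rw [div_le_iff₀ (by linarith)]
    linarith [h.1]
  set f : ℕ → ℝ := fun n => ∏ k ∈ Finset.Icc 1 n, (1 - x k) with hfdef
  set S : ℕ → ℝ := fun n => ∑ k ∈ Finset.Icc 1 n, x k with hSdef
  -- key identity
  have key' : ∀ m : ℕ, a (m + 1) / ((m : ℝ) + 1) = f m := by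
    intro m
    induction m with
    | zero =>
      simp [ha 1 le_rfl, hfdef]
    | succ m ih =>
      have h1 : a (m + 2) = a (m + 1) * (1 + β (m+1) * lam (m+1) / ((m:ℝ)+1)) := by
        rw [ha (m+2) (by omega), ha (m+1) (by omega)]
        have : m + 2 - 1 = m + 1 := rfl
        rw [this]
        rw [Finset.prod_Icc_succ_top (by omega : 1 ≤ m + 1)]
        simp only [Nat.add_sub_cancel]
        push_cast
        ring
      have h2 : f (m + 1) = f m * (1 - x (m+1)) :=
        Finset.prod_Icc_succ_top (by omega : 1 ≤ m + 1) _
      have hm1 : (0:ℝ) < (m:ℝ) + 1 := by positivity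
      have hm2 : (0:ℝ) < (m:ℝ) + 2 := by positivity
      have hx1 : x (m+1) = (1 - β (m+1) * lam (m+1)) / ((m:ℝ) + 2) := by
        rw [hxdef]; push_cast; ring_nf
      rw [h2, ← ih, h1, hx1]
      push_cast
      field_simp
      ring
  have key : ∀ n : ℕ, 1 ≤ n → a n / (n : ℝ) = f (n - 1) := by
    intro n hn
    obtain ⟨m, rfl⟩ := Nat.exists_eq_add_of_le hn
    have := key' m
    simpa [add_comm, Nat.add_sub_cancel] using key' m
  have fpos : ∀ n, 0 < f n := by
    intro n
    apply Finset.prod_pos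
    intro k hk
    have hk1 : 1 ≤ k := (Finset.mem_Icc.mp hk).1
    linarith [hxh k hk1]
  have hlogf : ∀ n, Real.log (f n) = ∑ k ∈ Finset.Icc 1 n, Real.log (1 - x k) := by
    intro n
    rw [hfdef, Real.log_prod]
    intro k hk
    have hk1 : 1 ≤ k := (Finset.mem_Icc.mp hk).1
    have := hxh k hk1; linarith
  have hub : ∀ n, Real.log (f n) ≤ -S n := by
    intro n
    rw [hlogf, hSdef]
    rw [← Finset.sum_neg_distrib]
    apply Finset.sum_le_sum
    intro k hk
    have hk1 : 1 ≤ k := (Finset.mem_Icc.mp hk).1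
    have hl := Real.log_le_sub_one_of_pos (by linarith [hxh k hk1] : (0:ℝ) < 1 - x k)
    linarith
  have hlb : ∀ n, -2 * S n ≤ Real.log (f n) := by
    intro n
    rw [hlogf, hSdef]
    have : -2 * ∑ k ∈ Finset.Icc 1 n, x k = ∑ k ∈ Finset.Icc 1 n, (-(2 * x k)) := by
      rw [Finset.mul_sum]; apply Finset.sum_congr rfl; intro k _; ring
    rw [this]
    apply Finset.sum_le_sum
    intro k hk
    have hk1 : 1 ≤ k := (Finset.mem_Icc.mp hk).1
    have h0 := hx0 k hk1
    have h2 := hxh k hk1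
    rw [← Real.log_exp (-(2 * x k))]
    exact Real.log_le_log (Real.exp_pos _) (exp_neg_two_le (x k) h0 h2)
  -- reduce a n / n to f
  have hiff1 : Tendsto (fun n : ℕ => a n / n) atTop (nhds 0) ↔
      Tendsto f atTop (nhds 0) := by
    constructor
    · intro h
      have h2 := h.comp (tendsto_add_atTop_nat 1)
      refine h2.congr fun n => ?_
      simp only [Function.comp]
      rw [show ((n + 1 : ℕ) : ℝ) = (n : ℝ) + 1 by push_cast; ring]
      exact key' n
    · intro h
      have h2 : Tendsto (fun n : ℕ => f (n - 1)) atTop (nhds 0) :=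
        h.comp (tendsto_sub_atTop_nat 1)
      apply h2.congr'
      filter_upwards [eventually_ge_atTop 1] with n hn
      exact (key n hn).symm
  rw [hiff1]
  constructor
  · -- f → 0 implies S → atTop
    intro h
    have hmem : Tendsto f atTop (nhdsWithin 0 (Set.Ioi 0)) := by
      apply tendsto_nhdsWithin_of_tendsto_nhds_of_eventually_within _ h
      exact Eventually.of_forall fun n => fpos n
    have hlog : Tendsto (fun n => Real.log (f n)) atTop atBot :=
      Real.tendsto_log_nhdsGT_zero.comp hmem
    have h2S : Tendsto (fun n => -2 * S n) atTop atBot :=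
      tendsto_atBot_mono hlb hlog
    rw [tendsto_atBot] at h2S
    rw [tendsto_atTop]
    intro b
    filter_upwards [h2S (-2 * b)] with n hn
    nlinarith
  · -- S → atTop implies f → 0
    intro h
    have hnS : Tendsto (fun n => -S n) atTop atBot := by
      rw [tendsto_atBot]
      rw [tendsto_atTop] at h
      intro b
      filter_upwards [h (-b)] with n hn
      linarith
    have hlog : Tendsto (fun n => Real.log (f n)) atTop atBot :=
      tendsto_atBot_mono hub hnS
    have := Real.tendsto_exp_atBot.comp hlog
    refine this.congr ?_
    intro n
    simp [Function.comp, Real.exp_log (fpos n)]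
end

section
/- Let {Y_i, 1 ≤ i ≤ n} be independent Bernoulli random variables with P(Y_i = 1) = 1/(b+i), where b ≥ 0. Then for all n > l ≥ 1, E(M_l(n)) = (2b + l)/((b+l)(b+l+1)), where M_l(n) = ∑_{k=1}^{n-l-1} Y_k(1−Y_{k+1})⋯(1−Y_{k+l})Y_{k+l+1} + (1−Y_1)⋯(1−Y_l)Y_{l+1} + Y_{n-l}(1−Y_{n-l+1})⋯(1−Y_n). -/
open MeasureTheory ProbabilityTheory Finset

/-! Every term of `M_l(n)` is a product of factors `Y i` and `1 - Y i` over distinct indices, so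
by independence its expectation is the same product evaluated at `λ_i = 1/(b+i)`. The failure
probabilities telescope, `∏_{j=1}^{l} (1 - 1/(b+a+j)) = (b+a)/(b+a+l)`, so an interior lapse
starting after trial `k` has probability `1/(b+k+l) - 1/(b+k+l+1)` and the final one `1/(b+n)`;
together these telescope to `1/(b+l+1)`, and the initial lapse adds `b/((b+l)(b+l+1))`. -/

/-- `M_l(n)` as a function of the outcomes `x i` of the trials. -/
def lapseCount (l n : ℕ) (x : ℕ → ℝ) : ℝ :=
  (∑ k ∈ Icc 1 (n - l - 1), x k * (∏ j ∈ Icc 1 l, (1 - x (k + j))) * x (k + l + 1))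
    + (∏ j ∈ Icc 1 l, (1 - x j)) * x (l + 1)
    + x (n - l) * ∏ j ∈ Icc 1 l, (1 - x (n - l + j))

/-- Successes on `s` and failures on `t`: an indicator on `{0,1}`-valued outcomes, a probability
on success probabilities. -/
def patternWeight {ι : Type*} (s t : Finset ι) (x : ι → ℝ) : ℝ :=
  (∏ i ∈ s, x i) * ∏ i ∈ t, (1 - x i)

lemma Finset.prod_Icc_const_add {M : Type*} [CommMonoid M] (f : ℕ → M) (c m n : ℕ) :
    ∏ j ∈ Icc m n, f (c + j) = ∏ i ∈ Icc (c + m) (c + n), f i := by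
  rw [← map_add_left_Icc, prod_map]
  rfl

lemma patternWeight_eq_prod_union {ι : Type*} [DecidableEq ι] {s t : Finset ι}
    (hst : Disjoint s t) (x : ι → ℝ) :
    patternWeight s t x = ∏ i ∈ s ∪ t, if i ∈ s then x i else 1 - x i := by
  rw [patternWeight, prod_union hst]
  congr 1
  · exact prod_congr rfl fun i hi => (if_pos hi).symm
  · exact prod_congr rfl fun i hi => (if_neg (disjoint_right.mp hst hi)).symm

lemma patternWeight_mem_Icc {ι : Type*} (s t : Finset ι) {x : ι → ℝ}
    (hx : ∀ i, x i ∈ Set.Icc 0 1) : patternWeight s t x ∈ Set.Icc 0 1 := by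
  have hx' : ∀ i, 1 - x i ∈ Set.Icc (0 : ℝ) 1 := fun i => by
    obtain ⟨h0, h1⟩ := hx i
    constructor <;> linarith
  exact ⟨mul_nonneg (prod_nonneg fun i _ => (hx i).1) (prod_nonneg fun i _ => (hx' i).1),
    mul_le_one₀ (prod_le_one (fun i _ => (hx i).1) fun i _ => (hx i).2)
      (prod_nonneg fun i _ => (hx' i).1) (prod_le_one (fun i _ => (hx' i).1) fun i _ => (hx' i).2)⟩

lemma lapseCount_eq_sum_patternWeight (l n : ℕ) (x : ℕ → ℝ) :
    lapseCount l n x =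
      (∑ k ∈ Icc 1 (n - l - 1), patternWeight {k, k + l + 1} (Icc (k + 1) (k + l)) x)
        + patternWeight {l + 1} (Icc 1 l) x
        + patternWeight {n - l} (Icc (n - l + 1) (n - l + l)) x := by
  have hinterior : ∀ k, x k * (∏ j ∈ Icc 1 l, (1 - x (k + j))) * x (k + l + 1)
      = patternWeight {k, k + l + 1} (Icc (k + 1) (k + l)) x := fun k => by
    rw [patternWeight, prod_pair (by omega), ← prod_Icc_const_add (fun i => 1 - x i)]
    ring
  rw [lapseCount, sum_congr rfl fun k _ => hinterior k, patternWeight, patternWeight,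
    prod_singleton, prod_singleton, mul_comm (x (l + 1)),
    ← prod_Icc_const_add (fun i => 1 - x i)]

lemma mul_prod_Icc_one_sub_one_div {c : ℝ} (hc : 0 ≤ c) (l : ℕ) :
    (c + l) * ∏ j ∈ Icc 1 l, (1 - 1 / (c + j)) = c := by
  induction l with
  | zero => simp
  | succ l ih =>
    have hstep : (c + ↑(l + 1)) * (1 - 1 / (c + ↑(l + 1))) = c + l := by
      have : c + ↑(l + 1) ≠ 0 := by positivity
      field_simp
      push_cast
      ring
    calc (c + ↑(l + 1)) * ∏ j ∈ Icc 1 (l + 1), (1 - 1 / (c + j))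
        = (c + ↑(l + 1)) * (1 - 1 / (c + ↑(l + 1))) * ∏ j ∈ Icc 1 l, (1 - 1 / (c + j)) := by
          rw [prod_Icc_succ_top (by omega)]
          ring
      _ = c := by rw [hstep, ih]

lemma sum_Icc_one_sub_succ {G : Type*} [AddCommGroup G] (f : ℕ → G) (m : ℕ) :
    ∑ k ∈ Icc 1 m, (f k - f (k + 1)) = f 1 - f (m + 1) := by
  rw [← Ico_add_one_right_eq_Icc, ← neg_sub (f (m + 1)), ← sum_Ico_sub f (by omega),
    ← sum_neg_distrib]
  simp only [neg_sub]

lemma lapseCount_of_eq_one_div {b : ℝ} (hb : 0 ≤ b) {l n : ℕ} (hl : 1 ≤ l) (hln : l < n)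
    {x : ℕ → ℝ} (hx : ∀ i, 1 ≤ i → x i = 1 / (b + i)) :
    lapseCount l n x = (2 * b + l) / ((b + l) * (b + l + 1)) := by
  have hfail : ∀ a : ℕ, ∏ j ∈ Icc 1 l, (1 - x (a + j)) = (b + a) / (b + a + l) := fun a =>
    calc ∏ j ∈ Icc 1 l, (1 - x (a + j)) = ∏ j ∈ Icc 1 l, (1 - 1 / (b + a + j)) :=
          prod_congr rfl fun j hj => by
            rw [hx _ (by grind), Nat.cast_add, add_assoc]
      _ = (b + a) / (b + a + l) := by
          rw [eq_div_iff (by positivity), mul_comm,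
            mul_prod_Icc_one_sub_one_div (by positivity)]
  have hlapse : ∀ a : ℕ, 1 ≤ a → x a * ∏ j ∈ Icc 1 l, (1 - x (a + j)) = 1 / (b + l + a) := by
    intro a ha
    have : 0 < b + a := by positivity
    rw [hx a ha, hfail]
    field_simp
    ring
  set F : ℕ → ℝ := fun k => 1 / (b + l + k)
  have hinterior : ∀ k ∈ Icc 1 (n - l - 1),
      x k * (∏ j ∈ Icc 1 l, (1 - x (k + j))) * x (k + l + 1) = F k - F (k + 1) := by
    intro k hk
    rw [hlapse k (mem_Icc.mp hk).1, hx _ (by omega)]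
    simp only [F]
    push_cast
    field_simp
    ring
  have hinitial : (∏ j ∈ Icc 1 l, (1 - x j)) * x (l + 1) = b / ((b + l) * (b + l + 1)) := by
    have h0 := hfail 0
    simp only [zero_add, Nat.cast_zero, add_zero] at h0
    rw [h0, hx _ (by omega), div_mul_div_comm, mul_one]
    push_cast
    ring
  have hn : n - l - 1 + 1 = n - l := by omega
  rw [lapseCount, sum_congr rfl hinterior, sum_Icc_one_sub_succ, hinitial,
    hlapse _ (by omega), hn]
  simp only [F, Nat.cast_one]
  field_simp
  ring

section Probability

variable {Ω : Type*} {m0 : MeasurableSpace Ω} (μ : Measure Ω)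

lemma integral_eq_measureReal_of_zero_or_one {f : Ω → ℝ} (hf : Measurable f)
    (h01 : ∀ ω, f ω = 0 ∨ f ω = 1) : ∫ ω, f ω ∂μ = μ.real {ω | f ω = 1} := by
  have hf_eq : f = {ω | f ω = 1}.indicator 1 := by
    ext ω
    rcases h01 ω with h | h <;> simp [h]
  conv_lhs => rw [hf_eq]
  exact integral_indicator_one (hf (measurableSet_singleton 1))

variable {ι : Type*} {μ}

lemma ProbabilityTheory.iIndepFun.integral_finset_prod_comp {β : Type*} [MeasurableSpace β]
    {Y : ι → Ω → β} (hY : iIndepFun Y μ) (hm : ∀ i, Measurable (Y i)) {f : ι → β → ℝ}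
    (hf : ∀ i, Measurable (f i)) (s : Finset ι) :
    ∫ ω, ∏ i ∈ s, f i (Y i ω) ∂μ = ∏ i ∈ s, ∫ ω, f i (Y i ω) ∂μ := by
  simpa [← prod_coe_sort s] using (hY.precomp Subtype.val_injective).integral_fun_prod_comp
    (f := fun i : s => f i) (fun i => (hm i).aemeasurable) fun i => (hf i).aestronglyMeasurable

lemma ProbabilityTheory.iIndepFun.integral_patternWeight {Y : ι → Ω → ℝ} (hY : iIndepFun Y μ)
    (hm : ∀ i, Measurable (Y i)) (hint : ∀ i, Integrable (Y i) μ) {s t : Finset ι}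
    (hst : Disjoint s t) :
    ∫ ω, patternWeight s t (Y · ω) ∂μ = patternWeight s t fun i => ∫ ω, Y i ω ∂μ := by
  classical
  have := hY.isProbabilityMeasure
  have hf : ∀ i, Measurable fun y : ℝ => if i ∈ s then y else 1 - y := fun i => by
    split_ifs <;> fun_prop
  simp_rw [patternWeight_eq_prod_union hst]
  rw [hY.integral_finset_prod_comp hm hf]
  refine prod_congr rfl fun i _ => ?_
  split_ifs
  · rfl
  · rw [integral_sub (integrable_const 1) (hint i), integral_const, probReal_univ, one_smul]

lemma integrable_patternWeight [IsFiniteMeasure μ] {Y : ι → Ω → ℝ} (hm : ∀ i, Measurable (Y i))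
    (hY : ∀ i ω, Y i ω ∈ Set.Icc 0 1) (s t : Finset ι) :
    Integrable (fun ω => patternWeight s t (Y · ω)) μ := by
  refine Integrable.of_bound (by unfold patternWeight; fun_prop) 1 (ae_of_all _ fun ω => ?_)
  obtain ⟨h0, h1⟩ := patternWeight_mem_Icc s t (hY · ω)
  rwa [Real.norm_of_nonneg h0]

theorem integral_lapseCount {Y : ℕ → Ω → ℝ} (hY : iIndepFun Y μ) (hm : ∀ i, Measurable (Y i))
    (hY_mem : ∀ i ω, Y i ω ∈ Set.Icc 0 1) (l n : ℕ) :
    ∫ ω, lapseCount l n (Y · ω) ∂μ = lapseCount l n fun i => ∫ ω, Y i ω ∂μ := by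
  have := hY.isProbabilityMeasure
  have hint : ∀ s t, Integrable (fun ω => patternWeight s t (Y · ω)) μ :=
    integrable_patternWeight hm hY_mem
  have hY_int : ∀ i, Integrable (Y i) μ := fun i => by
    simpa [patternWeight] using hint {i} ∅
  simp_rw [lapseCount_eq_sum_patternWeight]
  have hsum := integrable_finsetSum (Icc 1 (n - l - 1)) fun k _ =>
    hint {k, k + l + 1} (Icc (k + 1) (k + l))
  rw [integral_add (hsum.fun_add (hint _ _)) (hint _ _), integral_add hsum (hint _ _),
    integral_finsetSum _ fun _ _ => hint _ _]
  have hE := fun s t (hst : Disjoint s t) => hY.integral_patternWeight hm hY_int hst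
  rw [sum_congr rfl fun k _ => hE _ _ (by simp), hE _ _ (by simp), hE _ _ (by simp)]

end Probability

theorem stmt9_general {Ω : Type*} {m0 : MeasurableSpace Ω} (μ : Measure Ω)
    (Y : ℕ → Ω → ℝ) (b : ℝ) (hb : 0 ≤ b)
    (hmeas : ∀ i, Measurable (Y i))
    (h01 : ∀ i ω, Y i ω = 0 ∨ Y i ω = 1)
    (hindep : iIndepFun Y μ)
    (hbern : ∀ i : ℕ, 1 ≤ i → μ {ω | Y i ω = 1} = ENNReal.ofReal (1 / (b + i)))
    (n l : ℕ) (hl : 1 ≤ l) (hln : l < n) :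
    ∫ ω, ((∑ k ∈ Finset.Icc 1 (n - l - 1),
          Y k ω * (∏ j ∈ Finset.Icc 1 l, (1 - Y (k + j) ω)) * Y (k + l + 1) ω)
        + (∏ j ∈ Finset.Icc 1 l, (1 - Y j ω)) * Y (l + 1) ω
        + Y (n - l) ω * ∏ j ∈ Finset.Icc 1 l, (1 - Y (n - l + j) ω)) ∂μ
      = (2 * b + l) / ((b + l) * (b + l + 1)) := by
  have hY_mem : ∀ i ω, Y i ω ∈ Set.Icc (0 : ℝ) 1 := fun i ω => by
    rcases h01 i ω with h | h <;> simp [h]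
  have hp : ∀ i, 1 ≤ i → ∫ ω, Y i ω ∂μ = 1 / (b + i) := fun i hi => by
    rw [integral_eq_measureReal_of_zero_or_one μ (hmeas i) (h01 i), measureReal_def, hbern i hi,
      ENNReal.toReal_ofReal (by positivity)]
  change ∫ ω, lapseCount l n (Y · ω) ∂μ = _
  rw [integral_lapseCount hindep hmeas hY_mem, lapseCount_of_eq_one_div hb hl hln hp]

/-- For independent Bernoulli trials with `P(Y i = 1) = 1/(b+i)` (`b ≥ 0`), the expected
number of memory lapses of length `l` among the first `n` trials (`n > l ≥ 1`) is
`(2b+l)/((b+l)(b+l+1))`. -/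
theorem stmt9 {Ω : Type*} {m0 : MeasurableSpace Ω} (μ : Measure Ω) [IsProbabilityMeasure μ]
    (Y : ℕ → Ω → ℝ) (b : ℝ) (hb : 0 ≤ b)
    (hmeas : ∀ i, Measurable (Y i))
    (h01 : ∀ i ω, Y i ω = 0 ∨ Y i ω = 1)
    (hindep : iIndepFun Y μ)
    (hbern : ∀ i : ℕ, 1 ≤ i → μ {ω | Y i ω = 1} = ENNReal.ofReal (1 / (b + i)))
    (n l : ℕ) (hl : 1 ≤ l) (hln : l < n) :
    ∫ ω, ((∑ k ∈ Finset.Icc 1 (n - l - 1),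
          Y k ω * (∏ j ∈ Finset.Icc 1 l, (1 - Y (k + j) ω)) * Y (k + l + 1) ω)
        + (∏ j ∈ Finset.Icc 1 l, (1 - Y j ω)) * Y (l + 1) ω
        + Y (n - l) ω * ∏ j ∈ Finset.Icc 1 l, (1 - Y (n - l + j) ω)) ∂μ
      = (2 * b + l) / ((b + l) * (b + l + 1)) :=
  stmt9_general (m0 := m0) μ Y b hb hmeas h01 hindep hbern n l hl hln
end

section
/- For the linear BSRD, if ∑_{k=1}^∞ (1 − β_k λ_k)/(1+k) = ∞, then (S_n − E(S_n))/n → 0 almost surely as n → ∞. -/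
/-!
Write `p k = β k λ k`, `c n = E S n` and `a n = ∏_{k<n} (1 + p k / k)`. Conditioning on
`X₁, …, Xₙ` alone (tower property through `F n`, and independence of `Yₙ` from the past) gives
the linear drift `E[X_{n+1} | X₁, …, Xₙ] = αₙ + pₙ Sₙ / n`. Hence the innovations
`Dₙ = S_{n+1} - c_{n+1} - (1 + pₙ / n) (Sₙ - cₙ)` are martingale differences with `|Dₙ| ≤ 2`, so
`∑ Dₙ / (n + 1)` is an `L²`-bounded martingale and converges almost surely. As
`(Sₙ - cₙ) / aₙ = ∑_{i<n} Dᵢ / a_{i+1}`, Kronecker's lemma with the weights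
`bₙ = (n + 1) / a_{n+1}` yields `(Sₙ - cₙ) / n → 0`, provided `bₙ` increases to `∞`; and
`log bₙ ≥ ∑_{k=1}^n (1 - pₖ) / (k + 1)` by `log x ≤ x - 1`, which diverges by assumption.
-/

open MeasureTheory ProbabilityTheory Filter Finset Asymptotics Topology

theorem tendsto_sum_range_succ_mul_div_of_tendsto {b x : ℕ → ℝ} {L : ℝ} (hb : Monotone b)
    (hb_top : Tendsto b atTop atTop)
    (hx : Tendsto (fun n => ∑ i ∈ range n, x i) atTop (𝓝 L)) :
    Tendsto (fun n => (∑ i ∈ range (n + 1), b i * x i) / b n) atTop (𝓝 0) := by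
  set u : ℕ → ℝ := fun n => ∑ i ∈ range n, x i - L
  have hu : Tendsto u atTop (𝓝 0) := by simpa [u] using hx.sub_const L
  have h_by_parts : ∀ n, ∑ i ∈ range (n + 1), b i * x i
      = b n * u (n + 1) - b 0 * u 0 - ∑ i ∈ range n, (b (i + 1) - b i) * u (i + 1) := by
    intro n
    induction n with
    | zero => simp [u]; ring
    | succ n ih =>
      rw [sum_range_succ, ih, sum_range_succ]
      simp only [u, sum_range_succ]
      ring
  have h_rest : (fun n => ∑ i ∈ range n, (b (i + 1) - b i) * u (i + 1)) =o[atTop] b := by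
    have h_incr : (fun i => (b (i + 1) - b i) * u (i + 1)) =o[atTop] fun i => b (i + 1) - b i := by
      simpa using (isBigO_refl (fun i => b (i + 1) - b i) atTop).mul_isLittleO
        ((isLittleO_one_iff ℝ).2 (hu.comp (tendsto_add_atTop_nat 1)))
    have h_telescope : ∀ n, ∑ i ∈ range n, (b (i + 1) - b i) = b n - b 0 :=
      sum_range_sub b
    have h_const : (fun _ : ℕ => b 0) =o[atTop] b :=
      isLittleO_const_left.2 (Or.inr (tendsto_norm_atTop_atTop.comp hb_top))
    refine (h_incr.sum_range (fun i => sub_nonneg.2 (hb i.le_succ)) ?_).trans_isBigO ?_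
    · simp only [h_telescope]
      exact tendsto_atTop_add_const_right _ _ hb_top
    · simpa only [h_telescope] using (isBigO_refl b atTop).sub h_const.isBigO
  have h_lim : Tendsto (fun n => u (n + 1) - b 0 * u 0 / b n
      - (∑ i ∈ range n, (b (i + 1) - b i) * u (i + 1)) / b n) atTop (𝓝 (0 - 0 - 0)) :=
    ((hu.comp (tendsto_add_atTop_nat 1)).sub (tendsto_const_nhds.div_atTop hb_top)).sub
      h_rest.tendsto_div_nhds_zero
  rw [sub_zero, sub_zero] at h_lim
  refine h_lim.congr' ?_
  filter_upwards [hb_top.eventually_gt_atTop 0] with n hn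
  rw [h_by_parts]
  field_simp

lemma sum_range_sub_mul_div_prod {e r : ℕ → ℝ} (hr : ∀ k, r k ≠ 0) (n : ℕ) :
    ∑ i ∈ range n, (e (i + 1) - r i * e i) / ∏ k ∈ range (i + 1), r k
      = e n / ∏ k ∈ range n, r k - e 0 := by
  induction n with
  | zero => simp
  | succ n ih =>
    have hprod : ∏ k ∈ range n, r k ≠ 0 := prod_ne_zero_iff.2 fun k _ => hr k
    rw [sum_range_succ, ih, prod_range_succ]
    field_simp [hr n]
    ring

/-- The weight `(n + 1) / a (n + 1)`; the factor `k = 0` of the product is `1` as `p 0 / 0 = 0`. -/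
noncomputable def kroneckerWeight (p : ℕ → ℝ) (n : ℕ) : ℝ :=
  (n + 1) / ∏ k ∈ range (n + 1), (1 + p k / k)

section kroneckerWeight

variable {p : ℕ → ℝ}

lemma prod_one_add_div_pos (hp : ∀ k, 0 ≤ p k) (n : ℕ) : 0 < ∏ k ∈ range n, (1 + p k / k) :=
  prod_pos fun k _ => by have := hp k; positivity

lemma kroneckerWeight_nonneg (hp : ∀ k, 0 ≤ p k) (n : ℕ) : 0 ≤ kroneckerWeight p n :=
  div_nonneg (by positivity) (prod_one_add_div_pos hp _).le

lemma kroneckerWeight_succ_mul (hp : ∀ k, 0 ≤ p k) (n : ℕ) :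
    kroneckerWeight p (n + 1) * (1 - (1 - p (n + 1)) / (n + 2)) = kroneckerWeight p n := by
  unfold kroneckerWeight
  have := prod_one_add_div_pos hp (n + 1)
  have := hp (n + 1)
  rw [prod_range_succ _ (n + 1)]
  push_cast
  field_simp
  ring

lemma monotone_kroneckerWeight (hp0 : ∀ k, 0 ≤ p k) (hp1 : ∀ k, p k ≤ 1) :
    Monotone (kroneckerWeight p) := by
  refine monotone_nat_of_le_succ fun n => ?_
  rw [← kroneckerWeight_succ_mul hp0 n]
  refine mul_le_of_le_one_right (kroneckerWeight_nonneg hp0 _) ?_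
  have := hp1 (n + 1)
  have : 0 ≤ (1 - p (n + 1)) / (n + 2) := by positivity
  linarith

lemma exp_sum_le_kroneckerWeight (hp : ∀ k, 0 ≤ p k) (n : ℕ) :
    Real.exp (∑ k ∈ Icc 1 n, (1 - p k) / (1 + (k : ℝ))) ≤ kroneckerWeight p n := by
  induction n with
  | zero => simp [kroneckerWeight]
  | succ n ih =>
    set x := (1 - p (n + 1)) / (n + 2 : ℝ)
    have hexp : (1 - x) * Real.exp x ≤ 1 :=
      calc (1 - x) * Real.exp x ≤ Real.exp (-x) * Real.exp x := by
            gcongr; linarith [Real.add_one_le_exp (-x)]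
        _ = 1 := by rw [← Real.exp_add, neg_add_cancel, Real.exp_zero]
    calc Real.exp (∑ k ∈ Icc 1 (n + 1), (1 - p k) / (1 + (k : ℝ)))
        = Real.exp (∑ k ∈ Icc 1 n, (1 - p k) / (1 + (k : ℝ))) * Real.exp x := by
          rw [sum_Icc_succ_top (by omega), Real.exp_add]
          congr 2
          push_cast
          ring
      _ ≤ kroneckerWeight p n * Real.exp x := by gcongr
      _ = kroneckerWeight p (n + 1) * ((1 - x) * Real.exp x) := by
          rw [← kroneckerWeight_succ_mul hp n]; ring
      _ ≤ kroneckerWeight p (n + 1) :=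
          mul_le_of_le_one_right (kroneckerWeight_nonneg hp _) hexp

lemma tendsto_kroneckerWeight_atTop (hp : ∀ k, 0 ≤ p k)
    (hdiv : Tendsto (fun n => ∑ k ∈ Icc 1 n, (1 - p k) / (1 + (k : ℝ))) atTop atTop) :
    Tendsto (kroneckerWeight p) atTop atTop :=
  tendsto_atTop_mono (exp_sum_le_kroneckerWeight hp) (Real.tendsto_exp_atTop.comp hdiv)

lemma sum_range_succ_kroneckerWeight_mul_div (hp : ∀ k, 0 ≤ p k) {e : ℕ → ℝ} (he : e 0 = 0)
    (n : ℕ) :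
    (∑ i ∈ range (n + 1), kroneckerWeight p i * ((e (i + 1) - (1 + p i / i) * e i) / (i + 1)))
      / kroneckerWeight p n = e (n + 1) / (n + 1) := by
  have hr : ∀ k, 1 + p k / k ≠ 0 := fun k => by have := hp k; positivity
  have hterm : ∀ i : ℕ, kroneckerWeight p i * ((e (i + 1) - (1 + p i / i) * e i) / (i + 1))
      = (e (i + 1) - (1 + p i / i) * e i) / ∏ k ∈ range (i + 1), (1 + p k / k) := fun i => by
    have := prod_one_add_div_pos hp (i + 1)
    unfold kroneckerWeight
    field_simp
  have := prod_one_add_div_pos hp (n + 1)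
  rw [sum_congr rfl fun i _ => hterm i, sum_range_sub_mul_div_prod hr, he, sub_zero]
  unfold kroneckerWeight
  field_simp

end kroneckerWeight

namespace MeasureTheory

section Martingale

variable {Ω : Type*} {m0 : MeasurableSpace Ω} {μ : Measure Ω} {ℱ : Filtration ℕ m0}

lemma martingale_sum_range [IsFiniteMeasure μ] {Z : ℕ → Ω → ℝ}
    (hZ_meas : ∀ i, StronglyMeasurable[ℱ (i + 1)] (Z i)) (hZ_int : ∀ i, Integrable (Z i) μ)
    (hZ : ∀ i, μ[Z i | ℱ i] =ᵐ[μ] 0) :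
    Martingale (fun n ω => ∑ i ∈ range n, Z i ω) ℱ μ := by
  refine martingale_of_condExp_sub_eq_zero_nat (fun n => ?_) (fun n => ?_) fun n => ?_
  · refine Finset.stronglyMeasurable_fun_sum _ fun i hi => (hZ_meas i).mono (ℱ.mono ?_)
    exact mem_range.1 hi
  · exact integrable_finsetSum _ fun i _ => hZ_int i
  · have hdiff : (fun ω => ∑ i ∈ range (n + 1), Z i ω) - (fun ω => ∑ i ∈ range n, Z i ω) = Z n := by
      funext ω
      simp [sum_range_succ]
    rw [hdiff]
    exact hZ n

variable {f : ℕ → Ω → ℝ} {d : ℕ → ℝ}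

lemma abs_le_sum_of_abs_sub_le (h0 : f 0 = 0) (hd : ∀ n ω, |f (n + 1) ω - f n ω| ≤ d n)
    (n : ℕ) (ω : Ω) : |f n ω| ≤ ∑ i ∈ range n, d i := by
  induction n with
  | zero => simp [h0]
  | succ n ih =>
    rw [sum_range_succ]
    calc |f (n + 1) ω| = |f n ω + (f (n + 1) ω - f n ω)| := by ring_nf
      _ ≤ |f n ω| + |f (n + 1) ω - f n ω| := abs_add_le _ _
      _ ≤ _ := add_le_add ih (hd n ω)

variable [IsProbabilityMeasure μ]

theorem Martingale.integral_sq_le_sum (hf : Martingale f ℱ μ) (h0 : f 0 = 0)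
    (hd : ∀ n ω, |f (n + 1) ω - f n ω| ≤ d n) (n : ℕ) :
    ∫ ω, f n ω ^ 2 ∂μ ≤ ∑ i ∈ range n, d i ^ 2 := by
  have hint_mul : ∀ j k, Integrable (fun ω => f j ω * f k ω) μ := fun j k =>
    (hf.integrable k).bdd_mul ((hf.stronglyMeasurable j).mono (ℱ.le j)).aestronglyMeasurable
      (ae_of_all _ fun ω => abs_le_sum_of_abs_sub_le h0 hd j ω)
  induction n with
  | zero => simp [h0]
  | succ n ih =>
    have horth : ∫ ω, f n ω * f (n + 1) ω ∂μ = ∫ ω, f n ω * f n ω ∂μ := by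
      rw [← integral_condExp (ℱ.le n)]
      refine integral_congr_ae ?_
      filter_upwards [condExp_mul_of_stronglyMeasurable_left (hf.stronglyMeasurable n)
        (hint_mul n (n + 1)) (hf.integrable (n + 1)), hf.condExp_ae_eq n.le_succ] with ω h1 h2
      exact h1.trans (by rw [Pi.mul_apply, h2])
    have hincr : ∫ ω, (f (n + 1) ω - f n ω) ^ 2 ∂μ ≤ d n ^ 2 := by
      calc ∫ ω, (f (n + 1) ω - f n ω) ^ 2 ∂μ ≤ ∫ _, d n ^ 2 ∂μ :=
            integral_mono_of_nonneg (ae_of_all _ fun ω => sq_nonneg _) (integrable_const _)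
              (ae_of_all _ fun ω => sq_le_sq' (abs_le.1 (hd n ω)).1 (abs_le.1 (hd n ω)).2)
        _ = d n ^ 2 := by simp
    have hexpand : ∫ ω, (f (n + 1) ω - f n ω) ^ 2 ∂μ
        = ∫ ω, f (n + 1) ω ^ 2 ∂μ - ∫ ω, f n ω ^ 2 ∂μ := by
      have hsq : ∀ j, ∫ ω, f j ω ^ 2 ∂μ = ∫ ω, f j ω * f j ω ∂μ := fun j => by simp [sq]
      calc ∫ ω, (f (n + 1) ω - f n ω) ^ 2 ∂μ
          = ∫ ω, (f (n + 1) ω * f (n + 1) ω - 2 * (f n ω * f (n + 1) ω)) + f n ω * f n ω ∂μ :=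
            integral_congr_ae (ae_of_all _ fun ω => by ring)
        _ = _ := by
            have hint_sub : Integrable (fun ω => f (n + 1) ω * f (n + 1) ω
                - 2 * (f n ω * f (n + 1) ω)) μ := (hint_mul _ _).sub ((hint_mul _ _).const_mul 2)
            rw [integral_add hint_sub (hint_mul n n),
              integral_sub (hint_mul _ _) ((hint_mul _ _).const_mul 2), integral_const_mul, horth,
              hsq, hsq]
            ring
    rw [sum_range_succ]
    linarith

theorem Martingale.exists_ae_tendsto_of_summable_sq (hf : Martingale f ℱ μ) (h0 : f 0 = 0)
    (hd : ∀ n ω, |f (n + 1) ω - f n ω| ≤ d n) (hsum : Summable fun n => d n ^ 2) :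
    ∀ᵐ ω ∂μ, ∃ L, Tendsto (fun n => f n ω) atTop (𝓝 L) := by
  refine hf.submartingale.exists_ae_tendsto_of_bdd (R := (1 + ∑' n, d n ^ 2).toNNReal)
    fun n => ?_
  have hsq_int : Integrable (fun ω => f n ω ^ 2) μ := by
    simpa [sq] using (hf.integrable n).bdd_mul
      ((hf.stronglyMeasurable n).mono (ℱ.le n)).aestronglyMeasurable
      (ae_of_all _ fun ω => abs_le_sum_of_abs_sub_le h0 hd n ω)
  have hL1 : ∫ ω, ‖f n ω‖ ∂μ ≤ 1 + ∑' n, d n ^ 2 :=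
    calc ∫ ω, ‖f n ω‖ ∂μ ≤ ∫ ω, 1 + f n ω ^ 2 ∂μ := by
          refine integral_mono (hf.integrable n).norm ((integrable_const 1).add hsq_int)
            fun ω => ?_
          nlinarith [sq_nonneg (|f n ω| - 1), sq_abs (f n ω), Real.norm_eq_abs (f n ω)]
      _ = 1 + ∫ ω, f n ω ^ 2 ∂μ := by rw [integral_add (integrable_const 1) hsq_int]; simp
      _ ≤ 1 + ∑' n, d n ^ 2 := by
          gcongr
          exact (hf.integral_sq_le_sum h0 hd n).trans
            (hsum.sum_le_tsum _ fun i _ => sq_nonneg _)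
  rw [eLpNorm_one_eq_lintegral_enorm, ← ofReal_integral_norm_eq_lintegral_enorm (hf.integrable n)]
  exact ENNReal.ofReal_le_ofReal hL1

end Martingale

section ConditionalExpectation

variable {Ω : Type*} {m m' m0 : MeasurableSpace Ω} {μ : Measure Ω}

lemma integral_eq_of_eq_zero_or_one {f : Ω → ℝ} (hf : Measurable f)
    (h01 : ∀ ω, f ω = 0 ∨ f ω = 1) {q : ℝ} (hq : 0 ≤ q) (hμ : μ {ω | f ω = 1} = ENNReal.ofReal q) :
    ∫ ω, f ω ∂μ = q := by
  have hind : f = {ω | f ω = 1}.indicator 1 := funext fun ω => by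
    rcases h01 ω with h | h <;> simp [h]
  have hset : MeasurableSet {ω | f ω = 1} := hf (measurableSet_singleton 1)
  rw [hind, integral_indicator_one hset, measureReal_def, hμ, ENNReal.toReal_ofReal hq]

variable [IsProbabilityMeasure μ]

lemma abs_sub_integral_le {f : Ω → ℝ} {a b : ℝ} (hf : Integrable f μ)
    (h : ∀ ω, a ≤ f ω ∧ f ω ≤ b) (ω : Ω) : |f ω - ∫ ω', f ω' ∂μ| ≤ b - a := by
  have hlow : a ≤ ∫ ω', f ω' ∂μ := by
    simpa using integral_mono (integrable_const a) hf fun ω => (h ω).1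
  have hupp : ∫ ω', f ω' ∂μ ≤ b := by
    simpa using integral_mono hf (integrable_const b) fun ω => (h ω).2
  rw [abs_le]
  constructor <;> linarith [h ω]

variable {f g : Ω → ℝ} {a c : ℝ}

lemma integral_eq_of_condExp_eq_add_mul (hm : m ≤ m0) (hg : Integrable g μ)
    (h : μ[f | m] =ᵐ[μ] fun ω => a + c * g ω) : ∫ ω, f ω ∂μ = a + c * ∫ ω, g ω ∂μ := by
  rw [← integral_condExp hm, integral_congr_ae h, integral_add (integrable_const a)
    (hg.const_mul c), integral_const_mul]
  simp

lemma condExp_centered_residual_eq_zero (hm : m ≤ m0) (hf : Integrable f μ)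
    (hg_meas : StronglyMeasurable[m] g) (hg : Integrable g μ)
    (h : μ[f | m] =ᵐ[μ] fun ω => a + c * g ω) :
    μ[fun ω => f ω - ∫ ω', f ω' ∂μ - c * (g ω - ∫ ω', g ω' ∂μ) | m] =ᵐ[μ] 0 := by
  set w : Ω → ℝ := fun ω => -∫ ω', f ω' ∂μ - c * (g ω - ∫ ω', g ω' ∂μ)
  have hw_meas : StronglyMeasurable[m] w :=
    stronglyMeasurable_const.sub
      (stronglyMeasurable_const.mul (hg_meas.sub stronglyMeasurable_const))
  have hw : Integrable w μ :=
    (integrable_const _).sub ((hg.sub (integrable_const _)).const_mul c)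
  have hsplit : (fun ω => f ω - ∫ ω', f ω' ∂μ - c * (g ω - ∫ ω', g ω' ∂μ)) = f + w := by
    funext ω
    simp only [w, Pi.add_apply]
    ring
  rw [hsplit]
  filter_upwards [condExp_add hf hw m, h] with ω hadd hω
  rw [hadd, Pi.add_apply, hω, condExp_of_stronglyMeasurable hm hw_meas hw]
  simp only [w, Pi.zero_apply, integral_eq_of_condExp_eq_add_mul hm hg h]
  ring

lemma condExp_eq_of_condExp_eq_add_mul_indep (hmm' : m ≤ m') (hm' : m' ≤ m0) {Y : Ω → ℝ} {C : ℝ}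
    (hg : StronglyMeasurable[m] g) (hg_bdd : ∀ ω, |g ω| ≤ C) (hY : Measurable Y)
    (hY_int : Integrable Y μ) (hind : Indep (MeasurableSpace.comap Y inferInstance) m μ)
    (h : μ[f | m'] =ᵐ[μ] fun ω => a + c * (g ω * Y ω)) :
    μ[f | m] =ᵐ[μ] fun ω => a + c * (g ω * ∫ ω', Y ω' ∂μ) := by
  have hgY : Integrable (g * Y) μ :=
    hY_int.bdd_mul ((hg.mono (hmm'.trans hm')).aestronglyMeasurable) (ae_of_all _ hg_bdd)
  have hY_cond : μ[Y | m] =ᵐ[μ] fun _ => ∫ ω', Y ω' ∂μ :=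
    condExp_indep_eq hY.comap_le (hmm'.trans hm') (comap_measurable Y).stronglyMeasurable hind
  have hlin : (fun ω => a + c * (g ω * Y ω)) = (fun _ => a) + c • (g * Y) := rfl
  calc μ[f | m] =ᵐ[μ] μ[μ[f | m'] | m] := (condExp_condExp_of_le hmm' hm').symm
    _ =ᵐ[μ] μ[fun ω => a + c * (g ω * Y ω) | m] := condExp_congr_ae h
    _ =ᵐ[μ] (fun _ => a) + c • μ[g * Y | m] := by
        rw [hlin]
        filter_upwards [condExp_add (integrable_const a) (hgY.smul c) m, condExp_smul c (g * Y) m]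
          with ω h1 h2
        rw [h1, Pi.add_apply, h2, condExp_const (hmm'.trans hm')]
        rfl
    _ =ᵐ[μ] fun ω => a + c * (g ω * ∫ ω', Y ω' ∂μ) := by
        filter_upwards [condExp_mul_of_stronglyMeasurable_left hg hgY hY_int, hY_cond]
          with ω h1 h2
        rw [Pi.add_apply, Pi.smul_apply, h1, Pi.mul_apply, h2, smul_eq_mul]

end ConditionalExpectation

section PrefixFiltration

variable {Ω : Type*} {m0 : MeasurableSpace Ω}

def prefixFiltration {β : Type*} [MeasurableSpace β] (u : ℕ → Ω → β) (hu : ∀ j, Measurable (u j)) :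
    Filtration ℕ m0 where
  seq n := MeasurableSpace.comap (fun ω (j : Fin n) => u j ω) inferInstance
  mono' _ _ hnm := MeasurableSpace.comap_le_comap_of_eq_comp (fun v j => v (Fin.castLE hnm j))
    (by fun_prop) rfl
  le' n := (measurable_pi_lambda (fun ω (j : Fin n) => u j ω) fun j => hu j).comap_le

variable {β : Type*} [MeasurableSpace β] {u : ℕ → Ω → β} {hu : ∀ j, Measurable (u j)}

lemma prefixFiltration_zero : prefixFiltration u hu 0 = ⊥ := by
  change MeasurableSpace.comap _ MeasurableSpace.pi = ⊥
  rw [MeasurableSpace.pi, iSup_of_empty, MeasurableSpace.comap_bot]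

lemma measurable_prefixFiltration {n j : ℕ} (hj : j < n) :
    Measurable[prefixFiltration u hu n] (u j) :=
  (measurable_pi_apply (⟨j, hj⟩ : Fin n)).comp (comap_measurable (fun ω (j : Fin n) => u j ω))

lemma prefixFiltration_le_comap_prodMk {γ : Type*} [MeasurableSpace γ] (v : Ω → γ) (n : ℕ) :
    prefixFiltration u hu n
      ≤ MeasurableSpace.comap (fun ω => ((fun j : Fin n => u j ω), v ω)) inferInstance :=
  MeasurableSpace.comap_le_comap_of_eq_comp Prod.fst measurable_fst rfl

end PrefixFiltration

section LinearDrift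

variable {Ω : Type*} {m0 : MeasurableSpace Ω} {μ : Measure Ω}

/-- `a (n + 1)` times the increment `M (n + 1) - M n` of the martingale
`M n = (S n - E S n) / a n`. -/
noncomputable def innovation (μ : Measure Ω) (X S : ℕ → Ω → ℝ) (p : ℕ → ℝ) (n : ℕ) (ω : Ω) : ℝ :=
  X (n + 1) ω - ∫ ω', X (n + 1) ω' ∂μ - p n / n * (S n ω - ∫ ω', S n ω' ∂μ)

variable {ℱ : Filtration ℕ m0} {X S : ℕ → Ω → ℝ} {α p : ℕ → ℝ}

lemma innovation_eq {n : ℕ} (hS : ∀ n ω, S n ω = ∑ j ∈ range n, X (j + 1) ω)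
    (hX_int : Integrable (X (n + 1)) μ) (hS_int : Integrable (S n) μ) (ω : Ω) :
    innovation μ X S p n ω = S (n + 1) ω - ∫ ω', S (n + 1) ω' ∂μ
      - (1 + p n / n) * (S n ω - ∫ ω', S n ω' ∂μ) := by
  have hsucc : S (n + 1) = fun ω => S n ω + X (n + 1) ω := funext fun ω => by
    rw [hS, hS, sum_range_succ]
  rw [hsucc, integral_add hS_int hX_int, innovation]
  ring

lemma stronglyMeasurable_of_eq_sum_range (hS : ∀ n ω, S n ω = ∑ j ∈ range n, X (j + 1) ω)
    (hX_meas : ∀ n, StronglyMeasurable[ℱ (n + 1)] (X (n + 1))) (n : ℕ) :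
    StronglyMeasurable[ℱ n] (S n) := by
  simp_rw [funext (hS n)]
  exact Finset.stronglyMeasurable_fun_sum _ fun j hj => (hX_meas j).mono (ℱ.mono (mem_range.1 hj))

lemma bounds_of_eq_sum_range (hS : ∀ n ω, S n ω = ∑ j ∈ range n, X (j + 1) ω)
    (hX : ∀ j ω, 0 ≤ X j ω ∧ X j ω ≤ 1) (n : ℕ) (ω : Ω) : 0 ≤ S n ω ∧ S n ω ≤ n := by
  rw [hS]
  exact ⟨sum_nonneg fun j _ => (hX _ ω).1, (sum_le_sum fun j _ => (hX _ ω).2).trans_eq (by simp)⟩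

variable [IsProbabilityMeasure μ]

lemma abs_innovation_le {n : ℕ} (hX_int : Integrable (X (n + 1)) μ) (hS_int : Integrable (S n) μ)
    (hX : ∀ ω, 0 ≤ X (n + 1) ω ∧ X (n + 1) ω ≤ 1) (hS : ∀ ω, 0 ≤ S n ω ∧ S n ω ≤ n)
    (hp0 : 0 ≤ p n) (hp1 : p n ≤ 1) (ω : Ω) : |innovation μ X S p n ω| ≤ 2 := by
  have hpn0 : 0 ≤ p n / n := by positivity
  have hpn : p n / n * n ≤ 1 := by
    rcases eq_or_ne (n : ℝ) 0 with h | h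
    · simp [h]
    · rw [div_mul_cancel₀ _ h]; exact hp1
  calc |innovation μ X S p n ω|
      ≤ |X (n + 1) ω - ∫ ω', X (n + 1) ω' ∂μ| + p n / n * |S n ω - ∫ ω', S n ω' ∂μ| :=
        (abs_sub _ _).trans_eq (by rw [abs_mul, abs_of_nonneg hpn0])
    _ ≤ (1 - 0) + p n / n * (n - 0) := by
        gcongr
        · exact abs_sub_integral_le hX_int hX ω
        · exact abs_sub_integral_le hS_int hS ω
    _ ≤ 2 := by linarith

lemma ae_tendsto_sum_innovation_div
    (hX_meas : ∀ n, StronglyMeasurable[ℱ (n + 1)] (X (n + 1)))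
    (hS_meas : ∀ n, StronglyMeasurable[ℱ n] (S n))
    (hX_int : ∀ n, Integrable (X (n + 1)) μ) (hS_int : ∀ n, Integrable (S n) μ)
    (hdrift : ∀ n, μ[X (n + 1) | ℱ n] =ᵐ[μ] fun ω => α n + p n / n * S n ω)
    (hbound : ∀ n ω, |innovation μ X S p n ω| ≤ 2) :
    ∀ᵐ ω ∂μ, ∃ L, Tendsto (fun n => ∑ i ∈ range n, innovation μ X S p i ω / (i + 1))
      atTop (𝓝 L) := by
  have hmeas : ∀ n, StronglyMeasurable[ℱ (n + 1)] (innovation μ X S p n) := fun n => by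
    unfold innovation
    have := (hS_meas n).mono (ℱ.mono n.le_succ)
    have := hX_meas n
    fun_prop
  have hint : ∀ n, Integrable (innovation μ X S p n) μ := fun n =>
    .of_bound ((hmeas n).mono (ℱ.le _)).aestronglyMeasurable 2 (ae_of_all _ (hbound n))
  have hcond : ∀ n, μ[fun ω => innovation μ X S p n ω / (n + 1) | ℱ n] =ᵐ[μ] 0 := fun n => by
    have h0 : μ[innovation μ X S p n | ℱ n] =ᵐ[μ] 0 :=
      condExp_centered_residual_eq_zero (ℱ.le n) (hX_int n) (hS_meas n) (hS_int n) (hdrift n)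
    have hsmul : (fun ω => innovation μ X S p n ω / (n + 1))
        = ((n : ℝ) + 1)⁻¹ • innovation μ X S p n := by
      funext ω
      simp [div_eq_inv_mul]
    rw [hsmul]
    filter_upwards [condExp_smul (μ := μ) ((n : ℝ) + 1)⁻¹ (innovation μ X S p n) (ℱ n), h0]
      with ω h1 h2
    rw [h1, Pi.smul_apply, h2, Pi.zero_apply, smul_zero]
  have hsummable : Summable fun n : ℕ => (2 / ((n : ℝ) + 1)) ^ 2 := by
    have h := ((summable_nat_add_iff 1).2 (Real.summable_one_div_nat_pow.2 one_lt_two)).mul_left 4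
    refine h.congr fun n => ?_
    push_cast
    field_simp
    ring
  refine (martingale_sum_range (fun n => ?_) (fun n => (hint n).div_const _) hcond)
    |>.exists_ae_tendsto_of_summable_sq (funext fun ω => by simp) (fun n ω => ?_) hsummable
  · have := hmeas n
    fun_prop
  · simp only [sum_range_succ, add_sub_cancel_left, abs_div]
    rw [abs_of_pos (by positivity : (0 : ℝ) < n + 1)]
    gcongr
    exact hbound n ω

theorem ae_tendsto_sub_integral_div_of_condExp_eq_linear
    (hS : ∀ n ω, S n ω = ∑ j ∈ range n, X (j + 1) ω)
    (hX_meas : ∀ n, StronglyMeasurable[ℱ (n + 1)] (X (n + 1)))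
    (hX : ∀ j ω, 0 ≤ X j ω ∧ X j ω ≤ 1) (hp0 : ∀ k, 0 ≤ p k) (hp1 : ∀ k, p k ≤ 1)
    (hdrift : ∀ n, μ[X (n + 1) | ℱ n] =ᵐ[μ] fun ω => α n + p n / n * S n ω)
    (hdiv : Tendsto (fun n => ∑ k ∈ Icc 1 n, (1 - p k) / (1 + (k : ℝ))) atTop atTop) :
    ∀ᵐ ω ∂μ, Tendsto (fun n : ℕ => (S n ω - ∫ ω', S n ω' ∂μ) / n) atTop (𝓝 0) := by
  have hS_meas := stronglyMeasurable_of_eq_sum_range hS hX_meas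
  have hS_bound := bounds_of_eq_sum_range hS hX
  have hX_int : ∀ n, Integrable (X (n + 1)) μ := fun n =>
    .of_bound ((hX_meas n).mono (ℱ.le _)).aestronglyMeasurable 1
      (ae_of_all _ fun ω => abs_le.2 ⟨by linarith [hX (n + 1) ω], (hX (n + 1) ω).2⟩)
  have hS_int : ∀ n, Integrable (S n) μ := fun n =>
    .of_bound ((hS_meas n).mono (ℱ.le n)).aestronglyMeasurable n
      (ae_of_all _ fun ω => abs_le.2 ⟨by linarith [hS_bound n ω], (hS_bound n ω).2⟩)
  filter_upwards [ae_tendsto_sum_innovation_div hX_meas hS_meas hX_int hS_int hdrift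
    fun n => abs_innovation_le (hX_int n) (hS_int n) (hX (n + 1)) (hS_bound n) (hp0 n) (hp1 n)]
    with ω ⟨L, hL⟩
  have hkron := tendsto_sum_range_succ_mul_div_of_tendsto (monotone_kroneckerWeight hp0 hp1)
    (tendsto_kroneckerWeight_atTop hp0 hdiv) hL
  rw [← tendsto_add_atTop_iff_nat 1]
  refine hkron.congr fun n => ?_
  simp_rw [innovation_eq hS (hX_int _) (hS_int _)]
  rw [sum_range_succ_kroneckerWeight_mul_div hp0 (e := fun n => S n ω - ∫ ω', S n ω' ∂μ)
    (by simp [hS])]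
  push_cast
  rfl

end LinearDrift

end MeasureTheory

lemma condExp_prefixFiltration_eq_of_bsrd {Ω : Type*} {F m0 : MeasurableSpace Ω} {μ : Measure Ω}
    [IsProbabilityMeasure μ] {X Y S : ℕ → Ω → ℝ} {a b q : ℝ} {n : ℕ}
    (hS : ∀ m ω, S m ω = ∑ j ∈ range m, X (j + 1) ω)
    (hF : F = MeasurableSpace.comap
      (fun ω => ((fun j : Fin n => X (j + 1) ω), (fun j : Fin n => Y (j + 1) ω))) inferInstance)
    (hXmeas : ∀ j, Measurable (X j)) (hYmeas : ∀ j, Measurable (Y j))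
    (hX : ∀ j ω, 0 ≤ X j ω ∧ X j ω ≤ 1) (hY01 : ∀ ω, Y n ω = 0 ∨ Y n ω = 1) (hq : 0 ≤ q)
    (hbern : μ {ω | Y n ω = 1} = ENNReal.ofReal q)
    (hYind : IndepFun (Y n) (fun ω => (fun j : Fin n => X (j + 1) ω)) μ)
    (hmodel : μ[X (n + 1) | F] =ᵐ[μ] fun ω => a + b * S n ω * Y n ω / n) :
    μ[X (n + 1) | prefixFiltration (fun j => X (j + 1)) (fun j => hXmeas (j + 1)) n]
      =ᵐ[μ] fun ω => a + b * q / n * S n ω := by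
  have hF_le : F ≤ m0 := hF ▸ ((measurable_pi_lambda _ fun j => hXmeas _).prodMk
    (measurable_pi_lambda _ fun j => hYmeas _)).comap_le
  have hS_meas := stronglyMeasurable_of_eq_sum_range
    (ℱ := prefixFiltration (fun j => X (j + 1)) fun j => hXmeas (j + 1)) hS
    (fun j => (measurable_prefixFiltration j.lt_succ_self).stronglyMeasurable) n
  have hS_bdd : ∀ ω, |S n ω| ≤ n := fun ω =>
    abs_le.2 ⟨by linarith [bounds_of_eq_sum_range hS hX n ω], (bounds_of_eq_sum_range hS hX n ω).2⟩
  have hY_int : Integrable (Y n) μ := .of_bound (hYmeas n).aestronglyMeasurable 1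
    (ae_of_all _ fun ω => by rcases hY01 ω with h | h <;> simp [h])
  have h := condExp_eq_of_condExp_eq_add_mul_indep (c := b / n)
    (hF ▸ prefixFiltration_le_comap_prodMk _ n) hF_le hS_meas hS_bdd (hYmeas n) hY_int hYind
    (hmodel.trans (.of_eq (funext fun ω => by ring)))
  rw [integral_eq_of_eq_zero_or_one (hYmeas n) hY01 hq hbern] at h
  exact h.trans (.of_eq (funext fun ω => by ring))

theorem stmt16_general {Ω : Type*} {m0 : MeasurableSpace Ω} (μ : Measure Ω) [IsProbabilityMeasure μ]
    (X Y : ℕ → Ω → ℝ) (α β lam : ℕ → ℝ)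
    (S : ℕ → Ω → ℝ) (hS : ∀ m ω, S m ω = ∑ j ∈ Finset.range m, X (j + 1) ω)
    (F : ℕ → MeasurableSpace Ω)
    (hF : ∀ m, F m = MeasurableSpace.comap
      (fun ω => ((fun j : Fin m => X (j + 1) ω), (fun j : Fin m => Y (j + 1) ω))) inferInstance)
    (hXmeas : ∀ j, Measurable (X j)) (hYmeas : ∀ j, Measurable (Y j))
    (hX01 : ∀ j ω, X j ω = 0 ∨ X j ω = 1)
    (hY01 : ∀ j ω, Y j ω = 0 ∨ Y j ω = 1)
    (hα : ∀ n, 0 ≤ α n) (hβ : ∀ n, 0 ≤ β n) (hαβ : ∀ n, α n + β n ≤ 1)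
    (hlam0 : ∀ n, 0 ≤ lam n) (hlam1 : ∀ n, lam n ≤ 1)
    (hbern : ∀ n, μ {ω | Y n ω = 1} = ENNReal.ofReal (lam n))
    (hYind : ∀ n, IndepFun (Y n) (fun ω => (fun j : Fin n => X (j + 1) ω)) μ)
    (hinit : μ {ω | X 1 ω = 1} = ENNReal.ofReal (α 0))
    (hmodel : ∀ n : ℕ, 1 ≤ n →
      μ[X (n + 1) | MeasurableSpace.comap (fun ω => (S n ω, Y n ω)) inferInstance]
        =ᵐ[μ] fun ω => α n + β n * S n ω * Y n ω / n)
    (hBSRD : ∀ n : ℕ, 1 ≤ n →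
      μ[X (n + 1) | F n]
        =ᵐ[μ] μ[X (n + 1) | MeasurableSpace.comap (fun ω => (S n ω, Y n ω)) inferInstance])
    (hdiv : Tendsto
      (fun n : ℕ => ∑ k ∈ Finset.Icc 1 n, (1 - β k * lam k) / (1 + (k : ℝ))) atTop atTop) :
    ∀ᵐ ω ∂μ, Tendsto (fun n : ℕ => (S n ω - ∫ ω', S n ω' ∂μ) / n) atTop (nhds 0) := by
  have hX : ∀ j ω, 0 ≤ X j ω ∧ X j ω ≤ 1 := fun j ω => by rcases hX01 j ω with h | h <;> simp [h]
  have hp1 : ∀ k, β k * lam k ≤ 1 := fun k =>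
    (mul_le_of_le_one_right (hβ k) (hlam1 k)).trans (by linarith [hα k, hαβ k])
  set 𝒢 := prefixFiltration (fun j => X (j + 1)) fun j => hXmeas (j + 1)
  have hdrift : ∀ n, μ[X (n + 1) | 𝒢 n] =ᵐ[μ] fun ω => α n + β n * lam n / n * S n ω := by
    rintro (_ | n)
    -- at `n = 0` the drift term vanishes because `x / 0 = 0`
    · rw [prefixFiltration_zero, condExp_bot,
        integral_eq_of_eq_zero_or_one (hXmeas 1) (hX01 1) (hα 0) hinit]
      exact .of_eq (funext fun ω => by simp)
    · exact condExp_prefixFiltration_eq_of_bsrd hS (hF _) hXmeas hYmeas hX (hY01 _) (hlam0 _)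
        (hbern _) (hYind _) ((hBSRD _ n.succ_pos).trans (hmodel _ n.succ_pos))
  exact ae_tendsto_sub_integral_div_of_condExp_eq_linear (p := fun k => β k * lam k) hS
    (fun n => (measurable_prefixFiltration n.lt_succ_self).stronglyMeasurable) hX
    (fun k => mul_nonneg (hβ k) (hlam0 k)) hp1 hdrift hdiv

/-- SLLN for the linear BSRD: if `∑_{k=1}^∞ (1 - β k * λ k)/(1 + k) = ∞`, then
`(S n - E(S n))/n → 0` almost surely. -/
theorem stmt16 {Ω : Type*} {m0 : MeasurableSpace Ω} (μ : Measure Ω) [IsProbabilityMeasure μ]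
    (X Y : ℕ → Ω → ℝ) (α β lam : ℕ → ℝ)
    (S : ℕ → Ω → ℝ) (hS : ∀ m ω, S m ω = ∑ j ∈ Finset.range m, X (j + 1) ω)
    (F : ℕ → MeasurableSpace Ω)
    (hF : ∀ m, F m = MeasurableSpace.comap
      (fun ω => ((fun j : Fin m => X (j + 1) ω), (fun j : Fin m => Y (j + 1) ω))) inferInstance)
    (hXmeas : ∀ j, Measurable (X j)) (hYmeas : ∀ j, Measurable (Y j))
    (hX01 : ∀ j ω, X j ω = 0 ∨ X j ω = 1)
    (hY01 : ∀ j ω, Y j ω = 0 ∨ Y j ω = 1)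
    (hα : ∀ n, 0 ≤ α n) (hβ : ∀ n, 0 ≤ β n) (hαβ : ∀ n, α n + β n ≤ 1)
    (hlam0 : ∀ n, 0 ≤ lam n) (hlam1 : ∀ n, lam n ≤ 1)
    (hYindep : iIndepFun Y μ)
    (hbern : ∀ n, μ {ω | Y n ω = 1} = ENNReal.ofReal (lam n))
    (hYind : ∀ n, IndepFun (Y n) (fun ω => (fun j : Fin n => X (j + 1) ω)) μ)
    (hinit : μ {ω | X 1 ω = 1} = ENNReal.ofReal (α 0))
    (hmodel : ∀ n : ℕ, 1 ≤ n →
      μ[X (n + 1) | MeasurableSpace.comap (fun ω => (S n ω, Y n ω)) inferInstance]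
        =ᵐ[μ] fun ω => α n + β n * S n ω * Y n ω / n)
    (hBSRD : ∀ n : ℕ, 1 ≤ n →
      μ[X (n + 1) | F n]
        =ᵐ[μ] μ[X (n + 1) | MeasurableSpace.comap (fun ω => (S n ω, Y n ω)) inferInstance])
    (hdiv : Tendsto
      (fun n : ℕ => ∑ k ∈ Finset.Icc 1 n, (1 - β k * lam k) / (1 + (k : ℝ))) atTop atTop) :
    ∀ᵐ ω ∂μ, Tendsto (fun n : ℕ => (S n ω - ∫ ω', S n ω' ∂μ) / n) atTop (nhds 0) :=
  stmt16_general (m0 := m0) μ X Y α β lam S hS F hF hXmeas hYmeas hX01 hY01 hα hβ hαβ hlam0 hlam1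
    hbern hYind hinit hmodel hBSRD hdiv
end
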